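/- arXiv:1002.4862 — 6 statements merged into one kernel-verified Lean document; each statement's English description precedes it below -/
import Mathlib

section
/- For any natural number n and non-negative real numbers x_1, ..., x_n, the sum over i of x_i / sqrt(x_1 + ... + x_i) is at most 2 * sqrt(x_1 + ... + x_n), where terms with zero denominator are interpreted as zero. -/
/-!
Each term is bounded by a telescoping increment: with `S = s + a` and `s ≥ 0`,
`a = (√S - √s)(√S + √s) ≤ 2 √S (√S - √s)`, so `a / √S ≤ 2 (√S - √s)`.
-/

open Finset

lemma div_sqrt_add_le_two_mul_sub {s a : ℝ} (hs : 0 ≤ s) (ha : 0 ≤ a) :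
    a / √(s + a) ≤ 2 * (√(s + a) - √s) := by
  rcases (add_nonneg hs ha).eq_or_lt with h | h
  · simp [(add_eq_zero_iff_of_nonneg hs ha).mp h.symm]
  · have h_sqrt_pos : 0 < √(s + a) := Real.sqrt_pos.mpr h
    have h_mono : √s ≤ √(s + a) := Real.sqrt_le_sqrt (by linarith)
    have h_sq : √(s + a) ^ 2 = s + a := Real.sq_sqrt h.le
    have h_sq' : √s ^ 2 = s := Real.sq_sqrt hs
    rw [div_le_iff₀ h_sqrt_pos]
    nlinarith [Real.sqrt_nonneg s]

theorem stmt_0 (n : ℕ) (x : Fin n → ℝ) (hx : ∀ i, 0 ≤ x i) :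
    ∑ i, x i / Real.sqrt (∑ j ∈ Finset.Iic i, x j) ≤
      2 * Real.sqrt (∑ i, x i) := by
  induction n with
  | zero => simp
  | succ n ih =>
    have h_init := ih (fun i ↦ x i.castSucc) fun i ↦ hx _
    have h_last := div_sqrt_add_le_two_mul_sub
      (sum_nonneg fun i (_ : i ∈ univ) ↦ hx (Fin.castSucc i)) (hx (Fin.last n))
    simp only [Fin.sum_univ_castSucc, Fin.sum_Iic_castSucc, ← Fin.top_eq_last, Iic_top] at h_init h_last ⊢
    linarith
end

section
/- For positive reals D and g_1,...,g_T, among all non-increasing sequences of positive learning rates η_1 ≥ η_2 ≥ ... ≥ η_T, the bound B(η) = D²/(2η_T) + (1/2)∑_t g_t² η_t is minimized by the constant sequence η_t = D / sqrt(∑_{s=1}^T g_s²), achieving minimum value D * sqrt(∑_{t=1}^T g_t²). -/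
/-!
Since `η` is non-increasing, `∑ g_t² η_t ≥ G η_T` with `G = ∑ g_t²`, so `B(η)` is at least
`D² / (2x) + G x / 2` at `x = η_T`. By AM-GM, `(D - √G x)² ≥ 0`, this is at least `D √G`,
with equality at `x = D / √G`.
-/

section AMGM

variable {K : Type*} [Field K]

theorem mul_le_sq_div_add_sq_mul [LinearOrder K] [IsStrictOrderedRing K] (a b : K) {x : K}
    (hx : 0 < x) : a * b ≤ a ^ 2 / (2 * x) + 1 / 2 * (b ^ 2 * x) := by
  rw [div_add' _ _ _ (by positivity), le_div_iff₀ (by positivity)]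
  nlinarith [sq_nonneg (a - b * x)]

/-- Also true when `a = 0` or `b = 0`, where both sides are `0` through `a / 0 = 0`. -/
theorem sq_div_add_sq_mul_div_eq_mul [NeZero (2 : K)] (a b : K) :
    a ^ 2 / (2 * (a / b)) + 1 / 2 * (b ^ 2 * (a / b)) = a * b := by
  rcases eq_or_ne a 0 with rfl | ha
  · simp
  rcases eq_or_ne b 0 with rfl | hb
  · simp
  field_simp
  ring

end AMGM

theorem stmt_1_general (D : ℝ) (n : ℕ) (g : Fin (n + 1) → ℝ) :
    (∀ η : Fin (n + 1) → ℝ, (∀ t, 0 < η t) → (∀ s t, s ≤ t → η t ≤ η s) →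
      D * Real.sqrt (∑ t, (g t) ^ 2) ≤
        D ^ 2 / (2 * η (Fin.last n)) + (1 / 2) * ∑ t, (g t) ^ 2 * η t) ∧
    (let η : Fin (n + 1) → ℝ := fun _ => D / Real.sqrt (∑ t, (g t) ^ 2)
     D ^ 2 / (2 * η (Fin.last n)) + (1 / 2) * ∑ t, (g t) ^ 2 * η t =
       D * Real.sqrt (∑ t, (g t) ^ 2)) := by
  set G := ∑ t, (g t) ^ 2 with hG
  have hsqrt : Real.sqrt G ^ 2 = G := Real.sq_sqrt (by positivity)
  constructor
  · intro η hpos hanti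
    have hlast : G * η (Fin.last n) ≤ ∑ t, (g t) ^ 2 * η t := by
      rw [hG, Finset.sum_mul]
      gcongr with t
      exact hanti t _ (Fin.le_last t)
    calc D * Real.sqrt G
        ≤ D ^ 2 / (2 * η (Fin.last n)) + 1 / 2 * (G * η (Fin.last n)) := by
          simpa only [hsqrt] using mul_le_sq_div_add_sq_mul D (Real.sqrt G) (hpos _)
      _ ≤ D ^ 2 / (2 * η (Fin.last n)) + 1 / 2 * ∑ t, (g t) ^ 2 * η t := by gcongr
  · simpa only [← Finset.sum_mul, ← hG, hsqrt] using sq_div_add_sq_mul_div_eq_mul D (Real.sqrt G)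

theorem stmt_1 (D : ℝ) (hD : 0 < D) (n : ℕ) (g : Fin (n + 1) → ℝ)
    (hg : 0 < ∑ t, (g t) ^ 2) :
    (∀ η : Fin (n + 1) → ℝ, (∀ t, 0 < η t) → (∀ s t, s ≤ t → η t ≤ η s) →
      D * Real.sqrt (∑ t, (g t) ^ 2) ≤
        D ^ 2 / (2 * η (Fin.last n)) + (1 / 2) * ∑ t, (g t) ^ 2 * η t) ∧
    (let η : Fin (n + 1) → ℝ := fun _ => D / Real.sqrt (∑ t, (g t) ^ 2)
     D ^ 2 / (2 * η (Fin.last n)) + (1 / 2) * ∑ t, (g t) ^ 2 * η t =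
       D * Real.sqrt (∑ t, (g t) ^ 2)) :=
  stmt_1_general D n g
end

section
/- Setting η_t = D / sqrt(2 ∑_{s=1}^t g_s²) in the regret bound B(η) = D²/(2η_T) + (1/2)∑_{t=1}^T g_t² η_t yields B(η) ≤ D * sqrt(2 ∑_{t=1}^T g_t²), i.e., this adaptive choice is within a factor √2 of the optimal bound D * sqrt(∑_t g_t²). -/
/-!
Writing `S_t = ∑_{s ≤ t} g_s²`, the first term of the bound equals `D √(2 S_T) / 2`. The second is
`D / (2√2) · ∑_t g_t² / √S_t`, and since `g_t² / √S_t ≤ 2 (√S_t - √S_{t-1})` this sum telescopes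
to at most `2 √S_T`, so the second term is at most `D √(2 S_T) / 2` as well.
-/

open Finset Real

lemma div_sqrt_add_le_two_mul_sqrt_sub_sqrt {a b : ℝ} (ha : 0 ≤ a) (hb : 0 ≤ b) :
    a / √(b + a) ≤ 2 * (√(b + a) - √b) := by
  rcases ha.eq_or_lt with rfl | ha
  · simp
  have hu : 0 < √(b + a) := sqrt_pos.mpr (by linarith)
  have hvu : √b ≤ √(b + a) := sqrt_le_sqrt (by linarith)
  have hdiff : a = (√(b + a) - √b) * (√(b + a) + √b) := by
    nlinarith [sq_sqrt hb, sq_sqrt (add_nonneg hb ha.le)]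
  rw [div_le_iff₀ hu]
  calc a = (√(b + a) - √b) * (√(b + a) + √b) := hdiff
    _ ≤ (√(b + a) - √b) * (2 * √(b + a)) := by gcongr; linarith
    _ = 2 * (√(b + a) - √b) * √(b + a) := by ring

lemma sum_div_sqrt_sum_Iic_le {m : ℕ} (f : Fin m → ℝ) (hf : ∀ i, 0 ≤ f i) :
    ∑ t, f t / √(∑ s ∈ Iic t, f s) ≤ 2 * √(∑ t, f t) := by
  induction m with
  | zero => simp
  | succ m ih =>
    have hIic : Iic (Fin.last m) = univ := by ext; simp [Fin.le_last]
    have hlast := div_sqrt_add_le_two_mul_sqrt_sub_sqrt (hf (Fin.last m))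
      (sum_nonneg fun i (_ : i ∈ univ) => hf (Fin.castSucc i))
    have hinit := ih (fun i => f i.castSucc) fun i => hf _
    simp only [Fin.sum_univ_castSucc, Fin.sum_Iic_castSucc, hIic] at hlast ⊢
    linarith

lemma sq_div_two_mul_div (a b : ℝ) : a ^ 2 / (2 * (a / b)) = a * b / 2 := by
  rcases eq_or_ne a 0 with rfl | ha
  · simp
  rcases eq_or_ne b 0 with rfl | hb
  · simp
  field_simp

theorem stmt_2_general (D : ℝ) (hD : 0 < D) (n : ℕ) (g : Fin (n + 1) → ℝ) :
    (let η : Fin (n + 1) → ℝ :=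
      fun t => D / Real.sqrt (2 * ∑ s ∈ Finset.Iic t, (g s) ^ 2)
     D ^ 2 / (2 * η (Fin.last n)) + (1 / 2) * ∑ t, (g t) ^ 2 * η t ≤
       D * Real.sqrt (2 * ∑ t, (g t) ^ 2)) := by
  intro η
  have hη : ∀ t, g t ^ 2 * η t = D / √2 * (g t ^ 2 / √(∑ s ∈ Iic t, g s ^ 2)) := by
    intro t
    simp only [η, sqrt_mul zero_le_two]
    ring
  have hIic : Iic (Fin.last n) = univ := by ext; simp [Fin.le_last]
  have hsum := sum_div_sqrt_sum_Iic_le (fun t => g t ^ 2) fun t => sq_nonneg _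
  rw [sum_congr rfl fun t _ => hη t, ← mul_sum]
  simp only [η, hIic, sq_div_two_mul_div]
  calc _ ≤ D * √(2 * ∑ t, g t ^ 2) / 2 + 1 / 2 * (D / √2 * (2 * √(∑ t, g t ^ 2))) := by
        gcongr
    _ = D * √(2 * ∑ t, g t ^ 2) := by
        rw [sqrt_mul zero_le_two]
        field_simp
        linear_combination -√(∑ t, g t ^ 2) * sq_sqrt (zero_le_two : (0 : ℝ) ≤ 2)

theorem stmt_2 (D : ℝ) (hD : 0 < D) (n : ℕ) (g : Fin (n + 1) → ℝ)
    (hpos : ∀ t, 0 < ∑ s ∈ Finset.Iic t, (g s) ^ 2) :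
    (let η : Fin (n + 1) → ℝ :=
      fun t => D / Real.sqrt (2 * ∑ s ∈ Finset.Iic t, (g s) ^ 2)
     D ^ 2 / (2 * η (Fin.last n)) + (1 / 2) * ∑ t, (g t) ^ 2 * η t ≤
       D * Real.sqrt (2 * ∑ t, (g t) ^ 2)) :=
  stmt_2_general D hD n g
end

section
/- Let F = [0,D] ⊂ ℝ and f_t(x) = −Gx for all t, with G, η, D > 0. The gradient descent iterates x_1 = 0, x_{t+1} = min(D, x_t + Gη) satisfy x_t = min(D, (t−1)Gη). Consequently, if D/(2Gη) ≤ T, the regret over T rounds relative to the comparator x = D is at least D²/(4η). -/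
/-!
With step size `c = Gη` the iterates climb linearly, `x_t = min D ((t - 1) c)`, so during the first
`⌈D / (2c)⌉` rounds each iterate stays below `D / 2` and each of those rounds contributes at least
`D / 2` to `∑ (D - x_t)`; this gives at least `D² / (4c)`, and multiplying by `G` gives `D² / (4η)`.
-/

open Finset

theorem eq_min_of_clipped_linear_recurrence {D c : ℝ} (hD : 0 ≤ D) (hc : 0 ≤ c) {x : ℕ → ℝ}
    (hx1 : x 1 = 0) (hrec : ∀ t, 1 ≤ t → x (t + 1) = min D (x t + c)) :
    ∀ t, 1 ≤ t → x t = min D ((t - 1 : ℝ) * c) := by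
  intro t ht
  induction t, ht using Nat.le_induction with
  | base => simp [hx1, hD]
  | succ n hn ih =>
    rw [hrec n hn, ih, ← min_add_add_right, ← min_assoc,
      min_eq_left (le_add_of_nonneg_right hc : D ≤ D + c)]
    push_cast
    ring_nf

theorem sq_div_le_sum_sub_of_le_linear {D c : ℝ} (hD : 0 ≤ D) (hc : 0 < c) {y : ℕ → ℝ}
    (hy : ∀ t, 1 ≤ t → y t ≤ (t - 1 : ℝ) * c) (hyD : ∀ t, 1 ≤ t → y t ≤ D)
    {T : ℕ} (hT : D / (2 * c) ≤ T) :
    D ^ 2 / (4 * c) ≤ ∑ t ∈ Icc 1 T, (D - y t) := by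
  -- Over the first `N` rounds the iterates are still below `D / 2`.
  set N := ⌈D / (2 * c)⌉₊
  have hN : D / (2 * c) ≤ N := Nat.le_ceil _
  have hNT : N ≤ T := Nat.ceil_le.mpr hT
  have half_le : ∀ t ∈ Icc 1 N, D / 2 ≤ D - y t := by
    intro t ht
    obtain ⟨ht1, htN⟩ := mem_Icc.mp ht
    have hlt : (t - 1 : ℝ) < D / (2 * c) := by
      have := Nat.ceil_lt_add_one (show 0 ≤ D / (2 * c) by positivity)
      have : (t : ℝ) ≤ N := by exact_mod_cast htN
      linarith
    have : (t - 1 : ℝ) * c < D / 2 := by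
      rwa [lt_div_iff₀ (by positivity), mul_comm 2, ← mul_assoc, ← lt_div_iff₀ two_pos] at hlt
    linarith [hy t ht1]
  calc D ^ 2 / (4 * c) = D / (2 * c) * (D / 2) := by field_simp; ring
    _ ≤ N * (D / 2) := by gcongr
    _ ≤ ∑ t ∈ Icc 1 N, (D - y t) := by
      simpa using card_nsmul_le_sum _ _ _ half_le
    _ ≤ ∑ t ∈ Icc 1 T, (D - y t) :=
      sum_le_sum_of_subset_of_nonneg (Icc_subset_Icc_right hNT) fun t ht _ =>
        sub_nonneg.mpr (hyD t (mem_Icc.mp ht).1)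

theorem stmt_6 (D G η : ℝ) (hG : 0 < G) (hη : 0 < η) (hD : 0 < D)
    (x : ℕ → ℝ) (hx1 : x 1 = 0)
    (hrec : ∀ t, 1 ≤ t → x (t + 1) = min D (x t + G * η)) :
    (∀ t, 1 ≤ t → x t = min D ((t - 1 : ℝ) * G * η)) ∧
    (∀ T : ℕ, 1 ≤ T → D / (2 * G * η) ≤ (T : ℝ) →
      D ^ 2 / (4 * η) ≤ G * ∑ t ∈ Finset.Icc 1 T, (D - x t)) := by
  have hc : 0 < G * η := mul_pos hG hη
  have closed_form : ∀ t, 1 ≤ t → x t = min D ((t - 1 : ℝ) * (G * η)) :=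
    eq_min_of_clipped_linear_recurrence hD.le hc.le hx1 hrec
  refine ⟨fun t ht => by rw [closed_form t ht, mul_assoc], fun T _ hT => ?_⟩
  have regret := sq_div_le_sum_sub_of_le_linear hD.le hc
    (fun t ht => (closed_form t ht).trans_le (min_le_right _ _))
    (fun t ht => (closed_form t ht).trans_le (min_le_left _ _))
    (T := T) (by rwa [← mul_assoc])
  calc D ^ 2 / (4 * η) = G * (D ^ 2 / (4 * (G * η))) := by field_simp
    _ ≤ G * ∑ t ∈ Icc 1 T, (D - x t) := by gcongr
end

section
/- Let f : ℝ → ℝ be convex with subgradients bounded in absolute value by G on [0, D], and consider projected gradient descent x_{t+1} = clamp(x_t − η_t g_t, 0, D) with g_t ∈ ∂f_t(x_t), |g_t| ≤ G, and non-increasing positive η_t. Then for any comparator y ∈ [0, D], ∑_{t=1}^T g_t (x_t − y) ≤ D²/(2η_T) + (1/2) ∑_{t=1}^T g_t² η_t. -/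
/-!
Projection onto `[0, D]` does not increase the distance to a comparator `y ∈ [0, D]`, so
expanding the square of the unprojected step gives, for every `t`,
`g_t (x_t - y) ≤ ((x_t - y)² - (x_{t+1} - y)²) / (2 η_t) + g_t² η_t / 2`.
Summing, the potential differences telescope up to the increments
`(x_t - y)² (1/(2η_t) - 1/(2η_{t-1}))`; these are nonnegative because the rates do not increase,
and since every `(x_t - y)²` is at most `D²` their total is at most `D² / (2 η_T)`.
-/

open Finset

lemma abs_max_min_sub_le {α : Type*} [AddCommGroup α] [LinearOrder α] [IsOrderedAddMonoid α]
    {a b y : α} (hy : y ∈ Set.Icc a b) (z : α) : |max a (min b z) - y| ≤ |z - y| := by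
  have hab : a ≤ b := hy.1.trans hy.2
  simpa [Set.projIcc_of_mem hab hy, Set.coe_projIcc] using
    Set.abs_projIcc_sub_projIcc hab (c := z) (d := y)

lemma mul_sub_le_of_sq_sub_le {x x' y g η : ℝ} (hη : 0 < η)
    (h : (x' - y) ^ 2 ≤ (x - η * g - y) ^ 2) :
    g * (x - y) ≤ ((x - y) ^ 2 - (x' - y) ^ 2) / (2 * η) + 1 / 2 * (g ^ 2 * η) := by
  have expand : (x - η * g - y) ^ 2 = (x - y) ^ 2 - 2 * η * (g * (x - y)) + η * (g ^ 2 * η) := by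
    ring
  rw [div_add' _ _ _ (by positivity), le_div_iff₀ (by positivity)]
  nlinarith

lemma sum_le_div_add_sum_of_antitone {a b d η : ℕ → ℝ} {R : ℝ}
    (hη : ∀ t, 0 < η t) (hη_anti : Antitone η) (hd_nonneg : ∀ t, 0 ≤ d t)
    (hd_le : ∀ t, d (t + 1) ≤ R) (hstep : ∀ t, 1 ≤ t → a t ≤ (d t - d (t + 1)) / (2 * η t) + b t)
    (n : ℕ) : ∑ t ∈ Icc 1 n, a t ≤ R / (2 * η n) + ∑ t ∈ Icc 1 n, b t := by
  suffices key : ∀ n, ∑ t ∈ Icc 1 n, a t ≤ (R - d (n + 1)) / (2 * η n) + ∑ t ∈ Icc 1 n, b t by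
    have hη2 : 0 < 2 * η n := by linarith [hη n]
    have : (R - d (n + 1)) / (2 * η n) ≤ R / (2 * η n) := by
      gcongr
      linarith [hd_nonneg (n + 1)]
    linarith [key n]
  intro n
  induction n with
  | zero =>
    have : 0 ≤ (R - d 1) / (2 * η 0) := div_nonneg (by linarith [hd_le 0]) (by linarith [hη 0])
    simpa using this
  | succ n ih =>
    have hrate : (R - d (n + 1)) / (2 * η n) ≤ (R - d (n + 1)) / (2 * η (n + 1)) := by
      have := hη (n + 1)
      gcongr
      · linarith [hd_le n]
      · exact hη_anti n.le_succ
    have hsplit : (R - d (n + 1 + 1)) / (2 * η (n + 1))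
        = (R - d (n + 1)) / (2 * η (n + 1)) + (d (n + 1) - d (n + 1 + 1)) / (2 * η (n + 1)) := by
      rw [← add_div]; ring_nf
    rw [sum_Icc_succ_top (by omega), sum_Icc_succ_top (by omega), hsplit]
    linarith [hstep (n + 1) (by omega)]

theorem stmt_13_general (D : ℝ) (T : ℕ)
    (x g η : ℕ → ℝ) (hx1 : x 1 ∈ Set.Icc 0 D)
    (hηpos : ∀ t, 0 < η t) (hηmono : ∀ s t, s ≤ t → η t ≤ η s)
    (hrec : ∀ t, 1 ≤ t → x (t + 1) = max 0 (min D (x t - η t * g t))) :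
    ∀ y ∈ Set.Icc (0 : ℝ) D,
      ∑ t ∈ Finset.Icc 1 T, g t * (x t - y) ≤
        D ^ 2 / (2 * η T) +
          (1 / 2) * ∑ t ∈ Finset.Icc 1 T, (g t) ^ 2 * η t := by
  intro y hy
  have hD : 0 ≤ D := hy.1.trans hy.2
  have hmem : ∀ t, 1 ≤ t → x t ∈ Set.Icc 0 D := by
    intro t ht
    induction t, ht using Nat.le_induction with
    | base => exact hx1
    | succ n hn _ => rw [hrec n hn]; exact ⟨le_max_left _ _, max_le hD (min_le_left _ _)⟩
  have hdist : ∀ t, (x (t + 1) - y) ^ 2 ≤ D ^ 2 := by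
    intro t
    obtain ⟨h0, h1⟩ := hmem (t + 1) (by omega)
    nlinarith [hy.1, hy.2]
  have hstep : ∀ t, 1 ≤ t → g t * (x t - y) ≤
      ((x t - y) ^ 2 - (x (t + 1) - y) ^ 2) / (2 * η t) + 1 / 2 * (g t ^ 2 * η t) := by
    intro t ht
    refine mul_sub_le_of_sq_sub_le (hηpos t) (sq_le_sq.mpr ?_)
    rw [hrec t ht]
    exact abs_max_min_sub_le hy _
  rw [mul_sum]
  exact sum_le_div_add_sum_of_antitone hηpos hηmono (fun _ => sq_nonneg _) hdist hstep T

theorem stmt_13 (D G : ℝ) (hD : 0 < D) (T : ℕ) (hT : 1 ≤ T)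
    (x g η : ℕ → ℝ) (hx1 : x 1 ∈ Set.Icc 0 D)
    (hg : ∀ t, |g t| ≤ G)
    (hηpos : ∀ t, 0 < η t) (hηmono : ∀ s t, s ≤ t → η t ≤ η s)
    (hrec : ∀ t, 1 ≤ t → x (t + 1) = max 0 (min D (x t - η t * g t))) :
    ∀ y ∈ Set.Icc (0 : ℝ) D,
      ∑ t ∈ Finset.Icc 1 T, g t * (x t - y) ≤
        D ^ 2 / (2 * η T) +
          (1 / 2) * ∑ t ∈ Finset.Icc 1 T, (g t) ^ 2 * η t :=
  stmt_13_general D T x g η hx1 hηpos hηmono hrec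
end

section
/- For projected gradient descent on a closed convex set F ⊆ ℝⁿ with updates x_{t+1} = P(x_t − η_t g_t), where P is the Euclidean projection onto F and η_t is positive and non-increasing, regret against any y ∈ F satisfies ∑_{t=1}^T g_t·(x_t − y) ≤ D²/(2η_T) + (1/2)∑_{t=1}^T ‖g_t‖² η_t, where D is the diameter of F. -/
/-!
Write `a t = ‖x t - y‖²`. Since the projection onto a convex set does not increase distances to
points of the set, one step gives `2 η_t ⟪g_t, x_t - y⟫ ≤ a t - a (t + 1) + η_t² ‖g_t‖²`.
Dividing by `2 η_t` and summing, the terms `(a t - a (t + 1)) / (2 η_t)` telescope up to the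
weights; as `1 / η_t` is non-decreasing and `0 ≤ a t ≤ D²`, their sum is at most `D² / (2 η_T)`.
-/

open RealInnerProductSpace

section

variable {E : Type*} [NormedAddCommGroup E] [InnerProductSpace ℝ E] {K : Set E} {z p : E}

theorem real_inner_sub_le_zero_of_isNearest (hK : Convex ℝ K) (hp : p ∈ K)
    (hnear : ∀ w ∈ K, ‖z - p‖ ≤ ‖z - w‖) : ∀ w ∈ K, ⟪z - p, w - p⟫ ≤ 0 := by
  have : Nonempty K := ⟨⟨p, hp⟩⟩
  refine (norm_eq_iInf_iff_real_inner_le_zero hK hp).1 (le_antisymm ?_ ?_)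
  · exact le_ciInf fun w => hnear w w.2
  · have hbdd : BddBelow (Set.range fun w : K => ‖z - w‖) := ⟨0, by rintro _ ⟨w, rfl⟩; positivity⟩
    exact ciInf_le hbdd ⟨p, hp⟩

theorem norm_sub_le_of_isNearest (hK : Convex ℝ K) (hp : p ∈ K)
    (hnear : ∀ w ∈ K, ‖z - p‖ ≤ ‖z - w‖) {w : E} (hw : w ∈ K) : ‖p - w‖ ≤ ‖z - w‖ := by
  have hobtuse : 0 ≤ ⟪z - p, p - w⟫ := by
    have := real_inner_sub_le_zero_of_isNearest hK hp hnear w hw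
    rw [← neg_sub w p, inner_neg_right]
    linarith
  have hpyth : ‖z - w‖ ^ 2 = ‖z - p‖ ^ 2 + 2 * ⟪z - p, p - w⟫ + ‖p - w‖ ^ 2 := by
    rw [← norm_add_sq_real, sub_add_sub_cancel]
  refine (pow_le_pow_iff_left₀ (norm_nonneg _) (norm_nonneg _) two_ne_zero).1 ?_
  nlinarith [sq_nonneg ‖z - p‖]

theorem real_inner_le_of_norm_sub_le {x x' g y : E} {η : ℝ} (hη : 0 < η) (h : ‖x' - y‖ ≤ ‖x - η • g - y‖) :
    ⟪g, x - y⟫ ≤ (‖x - y‖ ^ 2 - ‖x' - y‖ ^ 2) / (2 * η) + ‖g‖ ^ 2 * η / 2 := by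
  have hexpand : ‖x - η • g - y‖ ^ 2 = ‖x - y‖ ^ 2 - 2 * η * ⟪g, x - y⟫ + η ^ 2 * ‖g‖ ^ 2 := by
    rw [sub_right_comm, norm_sub_sq_real, real_inner_smul_right, norm_smul, Real.norm_eq_abs,
      mul_pow, sq_abs, real_inner_comm]
    ring
  have hsq := pow_le_pow_left₀ (norm_nonneg _) h 2
  rw [div_add_div _ _ (by positivity) two_ne_zero, le_div_iff₀ (by positivity)]
  nlinarith

end

theorem sum_Icc_sub_div_le_of_antitone {𝕜 : Type*} [Field 𝕜] [LinearOrder 𝕜]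
    [IsStrictOrderedRing 𝕜] {a c : ℕ → 𝕜} {B : 𝕜} (hc : ∀ t, 0 < c t) (hanti : Antitone c)
    (haB : ∀ t, 1 ≤ t → a t ≤ B) (T : ℕ) :
    ∑ t ∈ Finset.Icc 1 T, (a t - a (t + 1)) / c t ≤ (B - a (T + 1)) / c T := by
  induction T with
  | zero => simpa using div_nonneg (sub_nonneg.2 (haB 1 le_rfl)) (hc 0).le
  | succ T ih =>
    have hslack : 0 ≤ B - a (T + 1) := sub_nonneg.2 (haB _ T.succ_pos)
    have hcT := hc (T + 1)
    have hcle : c (T + 1) ≤ c T := hanti T.le_succ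
    rw [Finset.sum_Icc_succ_top (by omega)]
    calc _ ≤ (B - a (T + 1)) / c T + (a (T + 1) - a (T + 1 + 1)) / c (T + 1) := by gcongr
      _ ≤ (B - a (T + 1)) / c (T + 1) + (a (T + 1) - a (T + 1 + 1)) / c (T + 1) := by gcongr
      _ = (B - a (T + 1 + 1)) / c (T + 1) := by rw [← add_div, sub_add_sub_cancel]

theorem stmt_14_general (n : ℕ) (F : Set (EuclideanSpace ℝ (Fin n)))
    (hFconv : Convex ℝ F)
    (hFbdd : Bornology.IsBounded F) (D : ℝ) (hD : D = Metric.diam F)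
    (P : EuclideanSpace ℝ (Fin n) → EuclideanSpace ℝ (Fin n))
    (hP : ∀ z, P z ∈ F ∧ ∀ w ∈ F, ‖z - P z‖ ≤ ‖z - w‖)
    (T : ℕ)
    (x g : ℕ → EuclideanSpace ℝ (Fin n)) (η : ℕ → ℝ)
    (hηpos : ∀ t, 0 < η t) (hηmono : ∀ s t, s ≤ t → η t ≤ η s)
    (hx1 : x 1 ∈ F)
    (hrec : ∀ t, 1 ≤ t → x (t + 1) = P (x t - η t • g t)) :
    ∀ y ∈ F,
      ∑ t ∈ Finset.Icc 1 T, ⟪g t, x t - y⟫ ≤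
        D ^ 2 / (2 * η T) +
          (1 / 2) * ∑ t ∈ Finset.Icc 1 T, ‖g t‖ ^ 2 * η t := by
  intro y hy
  have hxF : ∀ t, 1 ≤ t → x t ∈ F := fun t ht =>
    Nat.le_induction hx1 (fun m hm _ => hrec m hm ▸ (hP _).1) t ht
  have hstep : ∀ t ∈ Finset.Icc 1 T, ⟪g t, x t - y⟫ ≤
      (‖x t - y‖ ^ 2 - ‖x (t + 1) - y‖ ^ 2) / (2 * η t) + ‖g t‖ ^ 2 * η t / 2 := by
    intro t ht
    refine real_inner_le_of_norm_sub_le (hηpos t) ?_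
    rw [hrec t (Finset.mem_Icc.1 ht).1]
    exact norm_sub_le_of_isNearest hFconv (hP _).1 (hP _).2 hy
  have hdiam : ∀ t, 1 ≤ t → ‖x t - y‖ ^ 2 ≤ D ^ 2 := fun t ht => by
    rw [hD, ← dist_eq_norm]
    gcongr
    exact Metric.dist_le_diam_of_mem hFbdd (hxF t ht) hy
  have hanti : Antitone fun t => 2 * η t :=
    Antitone.const_mul (fun s t hst => hηmono s t hst) zero_le_two
  have htel := sum_Icc_sub_div_le_of_antitone (fun t => mul_pos two_pos (hηpos t)) hanti hdiam T
  calc _ ≤ ∑ t ∈ Finset.Icc 1 T,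
        ((‖x t - y‖ ^ 2 - ‖x (t + 1) - y‖ ^ 2) / (2 * η t) + ‖g t‖ ^ 2 * η t / 2) :=
        Finset.sum_le_sum hstep
    _ = ∑ t ∈ Finset.Icc 1 T, (‖x t - y‖ ^ 2 - ‖x (t + 1) - y‖ ^ 2) / (2 * η t) +
          (1 / 2) * ∑ t ∈ Finset.Icc 1 T, ‖g t‖ ^ 2 * η t := by
        rw [Finset.sum_add_distrib, ← Finset.sum_div]
        ring
    _ ≤ _ := by
        gcongr
        refine htel.trans (div_le_div_of_nonneg_right ?_ (mul_pos two_pos (hηpos T)).le)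
        exact sub_le_self _ (sq_nonneg _)

theorem stmt_14 (n : ℕ) (F : Set (EuclideanSpace ℝ (Fin n)))
    (hFne : F.Nonempty) (hFclosed : IsClosed F) (hFconv : Convex ℝ F)
    (hFbdd : Bornology.IsBounded F) (D : ℝ) (hD : D = Metric.diam F)
    (P : EuclideanSpace ℝ (Fin n) → EuclideanSpace ℝ (Fin n))
    (hP : ∀ z, P z ∈ F ∧ ∀ w ∈ F, ‖z - P z‖ ≤ ‖z - w‖)
    (T : ℕ) (hT : 1 ≤ T)
    (x g : ℕ → EuclideanSpace ℝ (Fin n)) (η : ℕ → ℝ)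
    (hηpos : ∀ t, 0 < η t) (hηmono : ∀ s t, s ≤ t → η t ≤ η s)
    (hx1 : x 1 ∈ F)
    (hrec : ∀ t, 1 ≤ t → x (t + 1) = P (x t - η t • g t)) :
    ∀ y ∈ F,
      ∑ t ∈ Finset.Icc 1 T, ⟪g t, x t - y⟫ ≤
        D ^ 2 / (2 * η T) +
          (1 / 2) * ∑ t ∈ Finset.Icc 1 T, ‖g t‖ ^ 2 * η t :=
  stmt_14_general n F hFconv hFbdd D hD P hP T x g η hηpos hηmono hx1 hrec
end
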